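/- arXiv:2604.00345 — 2 statements merged into one kernel-verified Lean document; each statement's English description precedes it below -/
import Mathlib

section
/- Let π : ℝ^m × ℝ^m × ℝ^m → ℝ^{2m} be the projection π(x₁, x₂, x₃) = (x₁ + x₃, x₂ + x₃). For r = (r₁, r₂, r₃) ∈ ℝ_+³, let B̃(0, r) = B(0, r₁) × B(0, r₂) × B(0, r₃) and let T(x, r) denote the twisted tube, where T(0, r) = B(0,r₁)×B(0,r₂) if r₁, r₂ ≥ r₃; T(0, r) = {(x₁,x₂) : |x₁ - x₂| < r₁, |x₂| < r₃} if r₁, r₃ ≥ r₂; and T(0, r) = {(x₁,x₂) : |x₂ - x₁| < r₂, |x₁| < r₃} if r₂, r₃ ≥ r₁. Then T(x, r/2) ⊆ x + π(B̃(0, r)) ⊆ T(x, 2r) for all x ∈ ℝ^{2m}. -/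
open MeasureTheory Metric

noncomputable section

/-- The twisted tube at the origin, for `r = (r₁,r₂,r₃)`:
a rectangle if `r₁,r₂ ≥ r₃`, a slant parallelogram based on the first
direction if `r₁,r₃ ≥ r₂`, and a slant parallelogram based on the second
direction if `r₂,r₃ ≥ r₁`. -/
def tubeZero (m : ℕ) (r : ℝ × ℝ × ℝ) :
    Set (EuclideanSpace ℝ (Fin m) × EuclideanSpace ℝ (Fin m)) :=
  if r.2.2 ≤ r.1 ∧ r.2.2 ≤ r.2.1 then
    (Metric.ball 0 r.1) ×ˢ (Metric.ball 0 r.2.1)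
  else if r.2.1 ≤ r.1 ∧ r.2.1 ≤ r.2.2 then
    {p | ‖p.1 - p.2‖ < r.1 ∧ ‖p.2‖ < r.2.2}
  else
    {p | ‖p.2 - p.1‖ < r.2.1 ∧ ‖p.1‖ < r.2.2}

/-- The twisted tube `T(x,r) = x + T(0,r)`. -/
def tube (m : ℕ) (x : EuclideanSpace ℝ (Fin m) × EuclideanSpace ℝ (Fin m))
    (r : ℝ × ℝ × ℝ) : Set (EuclideanSpace ℝ (Fin m) × EuclideanSpace ℝ (Fin m)) :=
  {p | p - x ∈ tubeZero m r}

/-- The quotient projection `π(x₁,x₂,x₃) = (x₁+x₃, x₂+x₃)`. -/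
def twProj (m : ℕ)
    (z : EuclideanSpace ℝ (Fin m) × EuclideanSpace ℝ (Fin m) × EuclideanSpace ℝ (Fin m)) :
    EuclideanSpace ℝ (Fin m) × EuclideanSpace ℝ (Fin m) :=
  (z.1 + z.2.2, z.2.1 + z.2.2)

/-- `T(x, r/2) ⊆ x + π(B̃(0,r)) ⊆ T(x, 2r)`. -/
theorem tube_proj_tube (m : ℕ)
    (x : EuclideanSpace ℝ (Fin m) × EuclideanSpace ℝ (Fin m))
    (r : ℝ × ℝ × ℝ) (h1 : 0 < r.1) (h2 : 0 < r.2.1) (h3 : 0 < r.2.2) :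
    tube m x (r.1 / 2, r.2.1 / 2, r.2.2 / 2) ⊆
      (x + ·) '' (twProj m ''
        ((Metric.ball 0 r.1) ×ˢ (Metric.ball 0 r.2.1) ×ˢ (Metric.ball 0 r.2.2))) ∧
    (x + ·) '' (twProj m ''
        ((Metric.ball 0 r.1) ×ˢ (Metric.ball 0 r.2.1) ×ˢ (Metric.ball 0 r.2.2))) ⊆
      tube m x (2 * r.1, 2 * r.2.1, 2 * r.2.2) := by
  constructor
  · intro p hp
    refine ⟨p - x, ?_, by simp⟩
    set y := p - x with hy
    unfold tube tubeZero at hp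
    simp only [← hy] at hp
    split_ifs at hp with hc1 hc2
    · obtain ⟨hp1, hp2⟩ := hp
      refine ⟨(y.1, y.2, 0), ⟨?_, ?_, ?_⟩, ?_⟩
      · simpa [mem_ball_zero_iff] using by
          have := mem_ball_zero_iff.mp hp1; linarith [this]
      · simpa [mem_ball_zero_iff] using by
          have := mem_ball_zero_iff.mp hp2; linarith [this]
      · simpa [mem_ball_zero_iff] using h3
      · simp [twProj]
    · obtain ⟨hp1, hp2⟩ := hp
      refine ⟨(y.1 - y.2, 0, y.2), ⟨?_, ?_, ?_⟩, ?_⟩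
      · simp only [mem_ball_zero_iff]; linarith
      · simpa [mem_ball_zero_iff] using h2
      · simp only [mem_ball_zero_iff]; linarith
      · simp [twProj, Prod.ext_iff]
    · obtain ⟨hp1, hp2⟩ := hp
      refine ⟨(0, y.2 - y.1, y.1), ⟨?_, ?_, ?_⟩, ?_⟩
      · simpa [mem_ball_zero_iff] using h1
      · simp only [mem_ball_zero_iff]; linarith
      · simp only [mem_ball_zero_iff]; linarith
      · simp [twProj, Prod.ext_iff]
  · rintro p ⟨q, ⟨⟨a, b, c⟩, ⟨ha, hb, hc⟩, rfl⟩, rfl⟩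
    simp only [Set.mem_prod, mem_ball_zero_iff] at ha hb hc
    have hna : ‖a‖ < r.1 := ha
    unfold tube tubeZero twProj
    have hsub : x + (a + c, b + c) - x = (a + c, b + c) := by abel
    simp only [Set.mem_setOf_eq, hsub]
    split_ifs with hc1 hc2
    · obtain ⟨h31, h32⟩ := hc1
      constructor
      · simp only [mem_ball_zero_iff]
        calc ‖a + c‖ ≤ ‖a‖ + ‖c‖ := norm_add_le _ _
          _ < 2 * r.1 := by linarith
      · simp only [mem_ball_zero_iff]
        calc ‖b + c‖ ≤ ‖b‖ + ‖c‖ := norm_add_le _ _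
          _ < 2 * r.2.1 := by linarith
    · obtain ⟨h21, h23⟩ := hc2
      constructor
      · have he : a + c - (b + c) = a - b := by abel
        simp only [he]
        calc ‖a - b‖ ≤ ‖a‖ + ‖b‖ := norm_sub_le _ _
          _ < 2 * r.1 := by linarith
      · calc ‖b + c‖ ≤ ‖b‖ + ‖c‖ := norm_add_le _ _
          _ < 2 * r.2.2 := by linarith
    · push_neg at hc1 hc2
      have h12 : r.1 < r.2.1 ∧ r.1 < r.2.2 := by
        constructor
        · by_contra hx
          push_neg at hx
          have t1 := hc2 (by linarith)
          have t2 := hc1 (by linarith)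
          linarith
        · by_contra hx
          push_neg at hx
          have t1 := hc1 (by linarith)
          have t2 := hc2 (by linarith)
          linarith
      constructor
      · have he : b + c - (a + c) = b - a := by abel
        simp only [he]
        calc ‖b - a‖ ≤ ‖b‖ + ‖a‖ := norm_sub_le _ _
          _ < 2 * r.2.1 := by linarith [h12.1]
      · calc ‖a + c‖ ≤ ‖a‖ + ‖c‖ := norm_add_le _ _
          _ < 2 * r.2.2 := by linarith [h12.2]


end
end

section
/- Fix β > 0. There exists C₀ = C₀(β, m) > 0 such that for every h ∈ L¹_loc(ℝ^{2m}), every x, y ∈ ℝ^{2m}, and every r ∈ ℝ_+³ with y ∈ T(x, βr), one has |(Poi_twist)_r * h(y)| ≤ C₀ M_tube(h)(x), where M_tube(h)(x) = sup_{r ∈ ℝ_+³} |T(x,r)|^{-1} ∫_{T(x,r)} |h|. -/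
open MeasureTheory Metric
open scoped ENNReal

noncomputable section

/-- The Euclidean Poisson kernel `Poi_s(v) = c s / (s² + |v|²)^{(m+1)/2}`. -/
def poiKer (m : ℕ) (c s : ℝ) (v : EuclideanSpace ℝ (Fin m)) : ℝ :=
  c * s / (s ^ 2 + ‖v‖ ^ 2) ^ (((m : ℝ) + 1) / 2)

/-- The twisted Poisson kernel `(Poi_twist)_r`. -/
def twPoi (m : ℕ) (c : ℝ) (r : ℝ × ℝ × ℝ)
    (x : EuclideanSpace ℝ (Fin m) × EuclideanSpace ℝ (Fin m)) : ℝ :=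
  ∫ u : EuclideanSpace ℝ (Fin m),
    poiKer m c r.1 (x.1 - u) * poiKer m c r.2.1 (x.2 - u) * poiKer m c r.2.2 u

/-- Convolution `(Poi_twist)_r * h`. -/
def twConv (m : ℕ) (c : ℝ) (r : ℝ × ℝ × ℝ)
    (h : EuclideanSpace ℝ (Fin m) × EuclideanSpace ℝ (Fin m) → ℝ)
    (y : EuclideanSpace ℝ (Fin m) × EuclideanSpace ℝ (Fin m)) : ℝ :=
  ∫ z, twPoi m c r (y - z) * h z

/-- The tube maximal function. -/
def tubeMaximal (m : ℕ)
    (h : EuclideanSpace ℝ (Fin m) × EuclideanSpace ℝ (Fin m) → ℝ)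
    (x : EuclideanSpace ℝ (Fin m) × EuclideanSpace ℝ (Fin m)) : ℝ≥0∞ :=
  ⨆ r : {r : ℝ × ℝ × ℝ // 0 < r.1 ∧ 0 < r.2.1 ∧ 0 < r.2.2},
    (volume (tube m x r.1))⁻¹ * ∫⁻ z in tube m x r.1, ENNReal.ofReal |h z|

/-!
Up to a factor `2^(m+1)` the Poisson kernel `P_s(v)` is the profile
`q_s(|v|) = s / (s + |v|)^(m+1)`, and two profiles multiply like
`P_a(v₁) P_b(v₂) ≲ q_{a+b}(|v₁ + v₂|) (P_a(v₁) + P_b(v₂))`, because the larger of `a + |v₁|` and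
`b + |v₂|` is at least half of `a + b + |v₁ + v₂|`. Applied to `P_{r₁}(w₁ - u) P_{r₃}(u)`, and then
once more to each of the two remaining `u`-integrals, this bounds the twisted kernel by
`q_{r₁+r₃}(|w₁|) (q_{r₁+r₂}(|w₁ - w₂|) + q_{r₂+r₃}(|w₂|))`.

Each product of two profiles is a double dyadic sum of indicators of the sets
`{|w₁| < 2^j (r₁+r₃), |w₁ - w₂| < 2^k (r₁+r₂)}` (or `|w₂| < 2^k (r₂+r₃)`) with weights
`≈ 2^(-j) 2^(-k) / volume`. Since `y ∈ T(x, βr)`, the translate by `y` of such a set lies in a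
twisted tube around `x` of volume `≲ (β+1)^(2m) 2^(jm) 2^(km) (r₁+r₃)^m (r₁+r₂)^m`, so each term is
at most `2^(-j) 2^(-k) M_tube h(x)` and the two geometric series sum to a constant. The constant
`c` of the kernels only contributes the factor `|c|³`.
-/

def poissonProfile (n : ℕ) (s t : ℝ) : ℝ := s / (s + t) ^ (n + 1)

section Profile

variable {n : ℕ}

lemma poissonProfile_nonneg {s t : ℝ} (hs : 0 ≤ s) (ht : 0 ≤ t) : 0 ≤ poissonProfile n s t := by
  unfold poissonProfile; positivity

lemma poissonProfile_le_two_pow_mul {a b t₁ t₂ T : ℝ} (ha : 0 < a) (hb : 0 ≤ b) (hT : 0 ≤ T)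
    (hdom : b + t₂ ≤ a + t₁) (hT_le : T ≤ t₁ + t₂) :
    poissonProfile n a t₁ ≤ 2 ^ (n + 1) * poissonProfile n (a + b) T := by
  have ht₁ : 0 ≤ a + t₁ := by linarith
  unfold poissonProfile
  calc a / (a + t₁) ^ (n + 1) ≤ (a + b) / (a + t₁) ^ (n + 1) := by gcongr; linarith
    _ = 2 ^ (n + 1) * ((a + b) / (2 * (a + t₁)) ^ (n + 1)) := by
        rw [mul_pow]; field_simp
    _ ≤ 2 ^ (n + 1) * ((a + b) / (a + b + T) ^ (n + 1)) := by gcongr; linarith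

end Profile

section PoissonKernel

variable {m : ℕ} {s : ℝ}

local notation "E" => EuclideanSpace ℝ (Fin m)

lemma poiKer_eq_mul (c s : ℝ) (v : E) : poiKer m c s v = c * poiKer m 1 s v := by
  unfold poiKer; ring

lemma poiKer_eq_div_sqrt_pow (s : ℝ) (v : E) :
    poiKer m 1 s v = s / √(s ^ 2 + ‖v‖ ^ 2) ^ (m + 1) := by
  rw [poiKer, one_mul, Real.sqrt_eq_rpow, ← Real.rpow_natCast _ (m + 1),
    ← Real.rpow_mul (by positivity)]
  congr 2
  push_cast
  ring

lemma poiKer_nonneg (hs : 0 ≤ s) (v : E) : 0 ≤ poiKer m 1 s v := by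
  rw [poiKer_eq_div_sqrt_pow]; positivity

lemma poiKer_sub_comm (s : ℝ) (v w : E) : poiKer m 1 s (v - w) = poiKer m 1 s (w - v) := by
  rw [poiKer, poiKer, norm_sub_rev]

lemma continuous_poiKer (hs : 0 < s) : Continuous (poiKer m 1 s) := by
  have hpos : ∀ v : E, 0 < √(s ^ 2 + ‖v‖ ^ 2) ^ (m + 1) := fun v => by positivity
  simp_rw [funext (poiKer_eq_div_sqrt_pow (m := m) s)]
  exact continuous_const.div (by fun_prop) fun v => (hpos v).ne'

lemma poiKer_le_poissonProfile (hs : 0 < s) (v : E) :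
    poiKer m 1 s v ≤ 2 ^ (m + 1) * poissonProfile m s ‖v‖ := by
  have hs_le : s ≤ √(s ^ 2 + ‖v‖ ^ 2) := Real.le_sqrt_of_sq_le (by nlinarith)
  have hv_le : ‖v‖ ≤ √(s ^ 2 + ‖v‖ ^ 2) := Real.le_sqrt_of_sq_le (by nlinarith)
  rw [poiKer_eq_div_sqrt_pow, poissonProfile]
  calc s / √(s ^ 2 + ‖v‖ ^ 2) ^ (m + 1)
        = 2 ^ (m + 1) * (s / (2 * √(s ^ 2 + ‖v‖ ^ 2)) ^ (m + 1)) := by rw [mul_pow]; field_simp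
    _ ≤ 2 ^ (m + 1) * (s / (s + ‖v‖) ^ (m + 1)) := by gcongr; linarith

lemma poiKer_mul_poiKer_le {a b : ℝ} (ha : 0 < a) (hb : 0 < b) (v₁ v₂ : E) :
    poiKer m 1 a v₁ * poiKer m 1 b v₂ ≤
      4 ^ (m + 1) * poissonProfile m (a + b) ‖v₁ + v₂‖ * (poiKer m 1 a v₁ + poiKer m 1 b v₂) := by
  wlog hdom : b + ‖v₂‖ ≤ a + ‖v₁‖ generalizing a b v₁ v₂
  · have := this hb ha v₂ v₁ (by linarith)
    rwa [add_comm b, add_comm v₂, mul_comm (poiKer m 1 b v₂), add_comm (poiKer m 1 b v₂)] at this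
  have hP₁ : poiKer m 1 a v₁ ≤ 4 ^ (m + 1) * poissonProfile m (a + b) ‖v₁ + v₂‖ :=
    calc poiKer m 1 a v₁ ≤ 2 ^ (m + 1) * poissonProfile m a ‖v₁‖ := poiKer_le_poissonProfile ha v₁
      _ ≤ 2 ^ (m + 1) * (2 ^ (m + 1) * poissonProfile m (a + b) ‖v₁ + v₂‖) := by
        gcongr
        exact poissonProfile_le_two_pow_mul ha hb.le (norm_nonneg _) hdom (norm_add_le _ _)
      _ = 4 ^ (m + 1) * poissonProfile m (a + b) ‖v₁ + v₂‖ := by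
        rw [← mul_assoc, ← mul_pow]; norm_num
  have hP₂ := poiKer_nonneg (m := m) hb.le v₂
  calc poiKer m 1 a v₁ * poiKer m 1 b v₂
      ≤ 4 ^ (m + 1) * poissonProfile m (a + b) ‖v₁ + v₂‖ * poiKer m 1 b v₂ := by gcongr
    _ ≤ _ := by
      gcongr
      · exact mul_nonneg (by positivity) (poissonProfile_nonneg (by linarith) (norm_nonneg _))
      · exact le_add_of_nonneg_left (poiKer_nonneg ha.le v₁)

lemma ofReal_poiKer_mul_poiKer_le {a b : ℝ} (ha : 0 < a) (hb : 0 < b) (v₁ v₂ : E) :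
    ENNReal.ofReal (poiKer m 1 a v₁) * ENNReal.ofReal (poiKer m 1 b v₂) ≤
      4 ^ (m + 1) * ENNReal.ofReal (poissonProfile m (a + b) ‖v₁ + v₂‖) *
        (ENNReal.ofReal (poiKer m 1 a v₁) + ENNReal.ofReal (poiKer m 1 b v₂)) := by
  have := poiKer_nonneg (m := m) ha.le v₁
  have := poiKer_nonneg (m := m) hb.le v₂
  have := poissonProfile_nonneg (n := m) (add_pos ha hb).le (norm_nonneg (v₁ + v₂))
  convert ENNReal.ofReal_le_ofReal (poiKer_mul_poiKer_le ha hb v₁ v₂) using 1 <;>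
    simp (disch := positivity) [ENNReal.ofReal_mul, ENNReal.ofReal_add, ENNReal.ofReal_pow]

end PoissonKernel

section Dyadic

variable {n : ℕ} {s : ℝ}

def dyadicWeight (n : ℕ) (s : ℝ) (j : ℕ) : ℝ≥0∞ :=
  ENNReal.ofReal (2 ^ (n + 1) * s / (2 ^ j * s) ^ (n + 1))

/-- Only the term with `2^(j-1) s ≤ s + t < 2^j s` is needed. -/
lemma ofReal_poissonProfile_le_tsum (hs : 0 < s) {t : ℝ} (ht : 0 ≤ t) :
    ENNReal.ofReal (poissonProfile n s t) ≤
      ∑' j, (Set.Iio (2 ^ j * s)).indicator (fun _ => dyadicWeight n s j) t := by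
  obtain ⟨k, hk_le, hk_lt⟩ :=
    exists_nat_pow_near ((one_le_div hs).mpr (by linarith : s ≤ s + t)) (one_lt_two (α := ℝ))
  rw [le_div_iff₀ hs] at hk_le
  rw [div_lt_iff₀ hs] at hk_lt
  refine le_trans ?_ (ENNReal.le_tsum (k + 1))
  rw [Set.indicator_of_mem (by simp only [Set.mem_Iio]; linarith)]
  apply ENNReal.ofReal_le_ofReal
  calc poissonProfile n s t ≤ s / (2 ^ k * s) ^ (n + 1) := by
        unfold poissonProfile; gcongr
    _ = 2 ^ (n + 1) * s / (2 ^ (k + 1) * s) ^ (n + 1) := by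
        rw [show (2 : ℝ) ^ (k + 1) * s = 2 * (2 ^ k * s) by ring, mul_pow]; field_simp; ring

lemma dyadicWeight_mul_le {β : ℝ} (hβ : 0 ≤ β) (hs : 0 < s) (j : ℕ) :
    dyadicWeight n s j * ENNReal.ofReal ((β * s + 2 ^ j * s) ^ n) ≤
      2 ^ (n + 1) * ENNReal.ofReal (β + 1) ^ n * 2⁻¹ ^ j := by
  have h2j : (1 : ℝ) ≤ 2 ^ j := one_le_pow₀ one_le_two
  have hrad : β * s + 2 ^ j * s ≤ (β + 1) * (2 ^ j * s) := by
    nlinarith [mul_nonneg (mul_nonneg hβ hs.le) (sub_nonneg.mpr h2j)]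
  rw [dyadicWeight, ← ENNReal.ofReal_mul (by positivity)]
  calc ENNReal.ofReal (2 ^ (n + 1) * s / (2 ^ j * s) ^ (n + 1) * (β * s + 2 ^ j * s) ^ n)
      ≤ ENNReal.ofReal (2 ^ (n + 1) * s / (2 ^ j * s) ^ (n + 1) * ((β + 1) * (2 ^ j * s)) ^ n) := by
        gcongr
    _ = ENNReal.ofReal (2 ^ (n + 1) * (β + 1) ^ n * 2⁻¹ ^ j) := by
        congr 1
        calc _ = 2 ^ (n + 1) * (β + 1) ^ n * (s / (2 ^ j * s)) := by
              rw [mul_pow _ (2 ^ j * s), pow_succ (2 ^ j * s)]; field_simp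
          _ = _ := by rw [inv_pow]; field_simp
    _ = 2 ^ (n + 1) * ENNReal.ofReal (β + 1) ^ n * 2⁻¹ ^ j := by
        simp (disch := positivity) [ENNReal.ofReal_mul, ENNReal.ofReal_pow,
          ENNReal.ofReal_inv_of_pos, ENNReal.inv_pow]

variable {E : Type*} [NormedAddCommGroup E] [NormedSpace ℝ E] [FiniteDimensional ℝ E]
  [MeasurableSpace E] [BorelSpace E] (μ : Measure E) [μ.IsAddHaarMeasure]

lemma dyadicWeight_mul_measure_ball_le {β : ℝ} (hβ : 0 ≤ β) (hs : 0 < s) (x : E) (j : ℕ) :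
    dyadicWeight (Module.finrank ℝ E) s j * μ (ball x (β * s + 2 ^ j * s)) ≤
      2 ^ (Module.finrank ℝ E + 1) * ENNReal.ofReal (β + 1) ^ Module.finrank ℝ E * μ (ball 0 1) *
        2⁻¹ ^ j := by
  rw [Measure.addHaar_ball_of_pos μ x (by positivity), ← mul_assoc, mul_right_comm _ _ (2⁻¹ ^ j)]
  exact mul_le_mul_left (dyadicWeight_mul_le hβ hs j) _

lemma lintegral_poissonProfile_le (hs : 0 < s) (x : E) :
    ∫⁻ u, ENNReal.ofReal (poissonProfile (Module.finrank ℝ E) s ‖x - u‖) ∂μ ≤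
      2 * 2 ^ (Module.finrank ℝ E + 1) * μ (ball 0 1) := by
  set n := Module.finrank ℝ E
  calc ∫⁻ u, ENNReal.ofReal (poissonProfile n s ‖x - u‖) ∂μ
      ≤ ∫⁻ u, ∑' j, (ball x (2 ^ j * s)).indicator (fun _ => dyadicWeight n s j) u ∂μ := by
        refine lintegral_mono fun u =>
          (ofReal_poissonProfile_le_tsum hs (norm_nonneg _)).trans_eq ?_
        simp [Set.indicator, mem_ball, dist_eq_norm, norm_sub_rev]
    _ = ∑' j, dyadicWeight n s j * μ (ball x (0 * s + 2 ^ j * s)) := by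
        rw [lintegral_tsum fun j => (measurable_const.indicator measurableSet_ball).aemeasurable]
        simp only [lintegral_indicator_const measurableSet_ball, zero_mul, zero_add]
    _ ≤ ∑' j, 2 ^ (n + 1) * μ (ball 0 1) * 2⁻¹ ^ j := by
        refine ENNReal.tsum_le_tsum fun j => ?_
        simpa using dyadicWeight_mul_measure_ball_le μ le_rfl hs x j
    _ = 2 * 2 ^ (n + 1) * μ (ball 0 1) := by
        rw [ENNReal.tsum_mul_left, ENNReal.tsum_geometric_two, mul_comm, mul_assoc]

end Dyadic

lemma ofReal_abs_integral_le_lintegral {α : Type*} [MeasurableSpace α] {μ : Measure α}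
    (f : α → ℝ) : ENNReal.ofReal |∫ a, f a ∂μ| ≤ ∫⁻ a, ENNReal.ofReal |f a| ∂μ := by
  simpa only [Real.enorm_eq_ofReal_abs] using enorm_integral_le_lintegral_enorm f

section TwistedKernel

variable {m : ℕ}

local notation "E" => EuclideanSpace ℝ (Fin m)

lemma measurable_ofReal_poiKer_sub {s : ℝ} (hs : 0 < s) (x : E) :
    Measurable fun u : E => ENNReal.ofReal (poiKer m 1 s (x - u)) :=
  ((continuous_poiKer hs).comp (continuous_sub_left x)).measurable.ennreal_ofReal

lemma lintegral_poiKer_le {s : ℝ} (hs : 0 < s) (x : E) :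
    ∫⁻ u, ENNReal.ofReal (poiKer m 1 s (x - u)) ≤ 2 * 4 ^ (m + 1) * volume (ball (0 : E) 1) := by
  have hprofile := lintegral_poissonProfile_le (volume : Measure E) hs x
  rw [finrank_euclideanSpace_fin] at hprofile
  calc ∫⁻ u, ENNReal.ofReal (poiKer m 1 s (x - u))
      ≤ ∫⁻ u, 2 ^ (m + 1) * ENNReal.ofReal (poissonProfile m s ‖x - u‖) := by
        refine lintegral_mono fun u => (ENNReal.ofReal_le_ofReal
          (poiKer_le_poissonProfile hs _)).trans_eq ?_
        simp (disch := positivity) [ENNReal.ofReal_mul, ENNReal.ofReal_pow]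
    _ = 2 ^ (m + 1) * ∫⁻ u, ENNReal.ofReal (poissonProfile m s ‖x - u‖) :=
        lintegral_const_mul' _ _ (by simp)
    _ ≤ 2 ^ (m + 1) * (2 * 2 ^ (m + 1) * volume (ball (0 : E) 1)) := by gcongr
    _ = 2 * 4 ^ (m + 1) * volume (ball (0 : E) 1) := by
        rw [show (4 : ℝ≥0∞) = 2 * 2 by norm_num, mul_pow]; ring

lemma lintegral_poiKer_mul_poiKer_le {a b : ℝ} (ha : 0 < a) (hb : 0 < b) (v w : E) :
    ∫⁻ u, ENNReal.ofReal (poiKer m 1 a (v - u)) * ENNReal.ofReal (poiKer m 1 b (w - u)) ≤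
      4 * 16 ^ (m + 1) * volume (ball (0 : E) 1) *
        ENNReal.ofReal (poissonProfile m (a + b) ‖v - w‖) := by
  set q := ENNReal.ofReal (poissonProfile m (a + b) ‖v - w‖)
  have hpt : ∀ u, ENNReal.ofReal (poiKer m 1 a (v - u)) * ENNReal.ofReal (poiKer m 1 b (w - u)) ≤
      4 ^ (m + 1) * q *
        (ENNReal.ofReal (poiKer m 1 a (v - u)) + ENNReal.ofReal (poiKer m 1 b (w - u))) := by
    intro u
    simpa only [sub_add_sub_cancel, poiKer_sub_comm b u w] using
      ofReal_poiKer_mul_poiKer_le ha hb (v - u) (u - w)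
  calc ∫⁻ u, ENNReal.ofReal (poiKer m 1 a (v - u)) * ENNReal.ofReal (poiKer m 1 b (w - u))
      ≤ ∫⁻ u, 4 ^ (m + 1) * q *
          (ENNReal.ofReal (poiKer m 1 a (v - u)) + ENNReal.ofReal (poiKer m 1 b (w - u))) :=
        lintegral_mono hpt
    _ = 4 ^ (m + 1) * q * ((∫⁻ u, ENNReal.ofReal (poiKer m 1 a (v - u))) +
          ∫⁻ u, ENNReal.ofReal (poiKer m 1 b (w - u))) := by
        rw [lintegral_const_mul' _ _ (by finiteness),
          lintegral_add_left (measurable_ofReal_poiKer_sub ha v)]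
    _ ≤ 4 ^ (m + 1) * q * (2 * 4 ^ (m + 1) * volume (ball (0 : E) 1) +
          2 * 4 ^ (m + 1) * volume (ball (0 : E) 1)) := by
        gcongr
        exacts [lintegral_poiKer_le ha v, lintegral_poiKer_le hb w]
    _ = 4 * 16 ^ (m + 1) * volume (ball (0 : E) 1) * q := by
        rw [show (16 : ℝ≥0∞) = 4 * 4 by norm_num, mul_pow]; ring

lemma ofReal_abs_twPoi_le {r : ℝ × ℝ × ℝ} (h₁ : 0 < r.1) (h₂ : 0 < r.2.1) (h₃ : 0 < r.2.2)
    (w : E × E) :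
    ENNReal.ofReal |twPoi m 1 r w| ≤
      4 * 64 ^ (m + 1) * volume (ball (0 : E) 1) *
        ENNReal.ofReal (poissonProfile m (r.1 + r.2.2) ‖w.1‖) *
        (ENNReal.ofReal (poissonProfile m (r.1 + r.2.1) ‖w.1 - w.2‖) +
          ENNReal.ofReal (poissonProfile m (r.2.1 + r.2.2) ‖w.2‖)) := by
  set P₁ := fun u : E => ENNReal.ofReal (poiKer m 1 r.1 (w.1 - u))
  set P₂ := fun u : E => ENNReal.ofReal (poiKer m 1 r.2.1 (w.2 - u))
  set P₃ := fun u : E => ENNReal.ofReal (poiKer m 1 r.2.2 (0 - u))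
  set q := ENNReal.ofReal (poissonProfile m (r.1 + r.2.2) ‖w.1‖)
  set C := 4 * 16 ^ (m + 1) * volume (ball (0 : E) 1)
  have hpt : ∀ u, ENNReal.ofReal
      |poiKer m 1 r.1 (w.1 - u) * poiKer m 1 r.2.1 (w.2 - u) * poiKer m 1 r.2.2 u| ≤
        4 ^ (m + 1) * q * (P₁ u * P₂ u + P₃ u * P₂ u) := by
    intro u
    have h₃u : poiKer m 1 r.2.2 u = poiKer m 1 r.2.2 (0 - u) := by
      rw [poiKer_sub_comm, sub_zero]
    have key := ofReal_poiKer_mul_poiKer_le h₁ h₃ (w.1 - u) u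
    rw [sub_add_cancel, h₃u] at key
    have := poiKer_nonneg (m := m) h₁.le (w.1 - u)
    have := poiKer_nonneg (m := m) h₂.le (w.2 - u)
    have := poiKer_nonneg (m := m) h₃.le (0 - u)
    rw [h₃u, abs_of_nonneg (by positivity), ENNReal.ofReal_mul (by positivity),
      ENNReal.ofReal_mul (by positivity), mul_right_comm]
    calc _ ≤ 4 ^ (m + 1) * q * (P₁ u + P₃ u) * P₂ u := by gcongr
      _ = _ := by ring
  calc ENNReal.ofReal |twPoi m 1 r w|
      ≤ ∫⁻ u, 4 ^ (m + 1) * q * (P₁ u * P₂ u + P₃ u * P₂ u) :=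
        (ofReal_abs_integral_le_lintegral _).trans (lintegral_mono hpt)
    _ = 4 ^ (m + 1) * q * ((∫⁻ u, P₁ u * P₂ u) + ∫⁻ u, P₃ u * P₂ u) := by
        rw [lintegral_const_mul' _ _ (by finiteness), lintegral_add_left (f := fun u => P₁ u * P₂ u)
          ((measurable_ofReal_poiKer_sub h₁ _).mul (measurable_ofReal_poiKer_sub h₂ _))]
    _ ≤ 4 ^ (m + 1) * q *
          (C * ENNReal.ofReal (poissonProfile m (r.1 + r.2.1) ‖w.1 - w.2‖) +
            C * ENNReal.ofReal (poissonProfile m (r.2.2 + r.2.1) ‖0 - w.2‖)) := by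
        gcongr
        exacts [lintegral_poiKer_mul_poiKer_le h₁ h₂ _ _, lintegral_poiKer_mul_poiKer_le h₃ h₂ _ _]
    _ = _ := by
        rw [zero_sub, norm_neg, add_comm r.2.2, show (64 : ℝ≥0∞) = 4 * 16 by norm_num, mul_pow]
        ring

end TwistedKernel

section Tubes

variable {m : ℕ}

local notation "E" => EuclideanSpace ℝ (Fin m)

lemma norm_lt_of_mem_tubeZero {σ : ℝ × ℝ × ℝ} (h₁ : 0 ≤ σ.1) (h₂ : 0 ≤ σ.2.1) (h₃ : 0 ≤ σ.2.2)
    {p : E × E} (hp : p ∈ tubeZero m σ) :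
    ‖p.1‖ < σ.1 + σ.2.2 ∧ ‖p.2‖ < σ.2.1 + σ.2.2 ∧ ‖p.1 - p.2‖ < σ.1 + σ.2.1 := by
  have t₁ : ‖p.1‖ ≤ ‖p.2‖ + ‖p.1 - p.2‖ := norm_le_norm_add_norm_sub' _ _
  have t₂ : ‖p.2‖ ≤ ‖p.1‖ + ‖p.1 - p.2‖ := norm_le_norm_add_norm_sub _ _
  have t₃ : ‖p.1 - p.2‖ ≤ ‖p.1‖ + ‖p.2‖ := norm_sub_le _ _
  unfold tubeZero at hp
  split_ifs at hp
  · simp only [Set.mem_prod, mem_ball_zero_iff] at hp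
    exact ⟨by linarith, by linarith, by linarith⟩
  · obtain ⟨hp₁, hp₂⟩ := hp
    exact ⟨by linarith, by linarith, by linarith⟩
  · obtain ⟨hp₁, hp₂⟩ := hp
    rw [norm_sub_rev] at hp₁
    exact ⟨by linarith, by linarith, by linarith⟩

lemma tube_prod_eq (x : E × E) (A B : ℝ) :
    tube m x (A, B, min A B) = ball x.1 A ×ˢ ball x.2 B := by
  ext z
  simp [tube, tubeZero, mem_ball, dist_eq_norm]

lemma tube_skew_eq (x : E × E) {A B : ℝ} (hA : 0 < A) (hB : 0 < B) :
    tube m x (min A B / 2, B, A) =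
      (fun z : E × E => (z.1, z.2 - z.1)) ⁻¹' (ball x.1 A ×ˢ ball (x.2 - x.1) B) := by
  have hA' : ¬A ≤ min A B / 2 := by have := min_le_left A B; linarith
  have hB' : ¬B ≤ min A B / 2 := by have := min_le_right A B; linarith
  ext z
  simp [tube, tubeZero, hA', hB', mem_ball, dist_eq_norm, sub_sub_sub_comm z.2, and_comm]

lemma volume_tube_prod (x : E × E) (A B : ℝ) :
    volume (tube m x (A, B, min A B)) = volume (ball (0 : E) A) * volume (ball (0 : E) B) := by
  rw [tube_prod_eq, Measure.volume_eq_prod, Measure.prod_prod, Measure.addHaar_ball_center _ x.1,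
    Measure.addHaar_ball_center _ x.2]

lemma volume_tube_skew (x : E × E) {A B : ℝ} (hA : 0 < A) (hB : 0 < B) :
    volume (tube m x (min A B / 2, B, A)) =
      volume (ball (0 : E) A) * volume (ball (0 : E) B) := by
  rw [tube_skew_eq x hA hB, Measure.volume_eq_prod,
    (measurePreserving_prod_sub volume volume).measure_preimage
      (measurableSet_ball.prod measurableSet_ball).nullMeasurableSet,
    Measure.prod_prod, Measure.addHaar_ball_center _ x.1, Measure.addHaar_ball_center _ (x.2 - x.1)]

lemma setLIntegral_tube_le_volume_mul_tubeMaximal (h : E × E → ℝ) (x : E × E)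
    {σ : ℝ × ℝ × ℝ} (hσ : 0 < σ.1 ∧ 0 < σ.2.1 ∧ 0 < σ.2.2) (hfin : volume (tube m x σ) ≠ ∞) :
    ∫⁻ z in tube m x σ, ENNReal.ofReal |h z| ≤ volume (tube m x σ) * tubeMaximal m h x := by
  rcases eq_or_ne (volume (tube m x σ)) 0 with h0 | h0
  · rw [setLIntegral_measure_zero _ _ h0]
    exact bot_le
  · rw [← ENNReal.inv_mul_le_iff h0 hfin]
    exact le_iSup_of_le (⟨σ, hσ⟩ : {r : ℝ × ℝ × ℝ // 0 < r.1 ∧ 0 < r.2.1 ∧ 0 < r.2.2}) le_rfl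

end Tubes

lemma ofReal_poissonProfile_mul_le_tsum {α : Type*} {n : ℕ} {a b : ℝ} (ha : 0 < a) (hb : 0 < b)
    {f g : α → ℝ} (hf : ∀ z, 0 ≤ f z) (hg : ∀ z, 0 ≤ g z) (H : α → ℝ≥0∞) (z : α) :
    ENNReal.ofReal (poissonProfile n a (f z)) * ENNReal.ofReal (poissonProfile n b (g z)) * H z ≤
      ∑' j, ∑' k, dyadicWeight n a j * dyadicWeight n b k *
        {z | f z < 2 ^ j * a ∧ g z < 2 ^ k * b}.indicator H z := by
  calc ENNReal.ofReal (poissonProfile n a (f z)) * ENNReal.ofReal (poissonProfile n b (g z)) * H z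
      ≤ (∑' j, (Set.Iio (2 ^ j * a)).indicator (fun _ => dyadicWeight n a j) (f z)) *
          (∑' k, (Set.Iio (2 ^ k * b)).indicator (fun _ => dyadicWeight n b k) (g z)) * H z := by
        gcongr
        exacts [ofReal_poissonProfile_le_tsum ha (hf z), ofReal_poissonProfile_le_tsum hb (hg z)]
    _ = ∑' j, ∑' k, (Set.Iio (2 ^ j * a)).indicator (fun _ => dyadicWeight n a j) (f z) *
          (Set.Iio (2 ^ k * b)).indicator (fun _ => dyadicWeight n b k) (g z) * H z := by
        simp only [← ENNReal.tsum_mul_right, ← ENNReal.tsum_mul_left]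
        exact ENNReal.tsum_comm
    _ = _ := by
        refine tsum_congr fun j => tsum_congr fun k => ?_
        by_cases hj : f z < 2 ^ j * a <;> by_cases hk : g z < 2 ^ k * b <;>
          simp [Set.indicator, hj, hk]

section TubeMaximal

variable {m : ℕ}

local notation "E" => EuclideanSpace ℝ (Fin m)

def SublevelsInTubes (x : E × E) (p q : E × E → E) (a b β : ℝ) : Prop :=
  ∀ R₁ R₂ : ℝ, 0 < R₁ → 0 < R₂ → ∃ σ : ℝ × ℝ × ℝ, (0 < σ.1 ∧ 0 < σ.2.1 ∧ 0 < σ.2.2) ∧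
    {z | ‖p z‖ < R₁ ∧ ‖q z‖ < R₂} ⊆ tube m x σ ∧
    volume (tube m x σ) ≤ volume (ball (0 : E) (β * a + R₁)) * volume (ball (0 : E) (β * b + R₂))

lemma sublevelsInTubes_fst_snd {β : ℝ} (hβ : 0 ≤ β) {r : ℝ × ℝ × ℝ} (h₁ : 0 < r.1)
    (h₂ : 0 < r.2.1) (h₃ : 0 < r.2.2) {x y : E × E}
    (hy : y ∈ tube m x (β * r.1, β * r.2.1, β * r.2.2)) :
    SublevelsInTubes x (fun z => (y - z).1) (fun z => (y - z).2)
      (r.1 + r.2.2) (r.2.1 + r.2.2) β := by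
  obtain ⟨hy₁, hy₂, -⟩ := norm_lt_of_mem_tubeZero (by positivity) (by positivity) (by positivity) hy
  intro R₁ R₂ hR₁ hR₂
  set A := β * (r.1 + r.2.2) + R₁
  set B := β * (r.2.1 + r.2.2) + R₂
  have hA : 0 < A := by positivity
  have hB : 0 < B := by positivity
  refine ⟨(A, B, min A B), ⟨hA, hB, lt_min hA hB⟩, ?_, (volume_tube_prod x A B).le⟩
  rintro z ⟨hz₁, hz₂⟩
  rw [tube_prod_eq, Set.mem_prod, mem_ball, mem_ball, dist_eq_norm, dist_eq_norm]
  constructor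
  · calc ‖z.1 - x.1‖ = ‖(y - x).1 - (y - z).1‖ := by simp
      _ ≤ ‖(y - x).1‖ + ‖(y - z).1‖ := norm_sub_le _ _
      _ < A := by dsimp only at hy₁ hz₁; linarith [mul_add β r.1 r.2.2]
  · calc ‖z.2 - x.2‖ = ‖(y - x).2 - (y - z).2‖ := by simp
      _ ≤ ‖(y - x).2‖ + ‖(y - z).2‖ := norm_sub_le _ _
      _ < B := by dsimp only at hy₂ hz₂; linarith [mul_add β r.2.1 r.2.2]

lemma sublevelsInTubes_fst_sub {β : ℝ} (hβ : 0 ≤ β) {r : ℝ × ℝ × ℝ} (h₁ : 0 < r.1)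
    (h₂ : 0 < r.2.1) (h₃ : 0 < r.2.2) {x y : E × E}
    (hy : y ∈ tube m x (β * r.1, β * r.2.1, β * r.2.2)) :
    SublevelsInTubes x (fun z => (y - z).1) (fun z => (y - z).1 - (y - z).2)
      (r.1 + r.2.2) (r.1 + r.2.1) β := by
  obtain ⟨hy₁, -, hy₃⟩ := norm_lt_of_mem_tubeZero (by positivity) (by positivity) (by positivity) hy
  intro R₁ R₂ hR₁ hR₂
  set A := β * (r.1 + r.2.2) + R₁
  set B := β * (r.1 + r.2.1) + R₂
  have hA : 0 < A := by positivity
  have hB : 0 < B := by positivity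
  refine ⟨(min A B / 2, B, A), ⟨by positivity, hB, hA⟩, ?_, (volume_tube_skew x hA hB).le⟩
  rintro z ⟨hz₁, hz₂⟩
  rw [tube_skew_eq x hA hB, Set.mem_preimage, Set.mem_prod, mem_ball, mem_ball, dist_eq_norm,
    dist_eq_norm]
  constructor
  · calc ‖z.1 - x.1‖ = ‖(y - x).1 - (y - z).1‖ := by simp
      _ ≤ ‖(y - x).1‖ + ‖(y - z).1‖ := norm_sub_le _ _
      _ < A := by dsimp only at hy₁ hz₁; linarith [mul_add β r.1 r.2.2]
  · calc ‖z.2 - z.1 - (x.2 - x.1)‖ = ‖((y - z).1 - (y - z).2) - ((y - x).1 - (y - x).2)‖ := by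
          congr 1; simp only [Prod.fst_sub, Prod.snd_sub]; abel
      _ ≤ ‖(y - z).1 - (y - z).2‖ + ‖(y - x).1 - (y - x).2‖ := norm_sub_le _ _
      _ < B := by dsimp only at hy₃ hz₂; linarith [mul_add β r.1 r.2.1]

lemma dyadicWeight_mul_volume_ball_le {β : ℝ} (hβ : 0 ≤ β) {s : ℝ} (hs : 0 < s) (j : ℕ) :
    dyadicWeight m s j * volume (ball (0 : E) (β * s + 2 ^ j * s)) ≤
      2 ^ (m + 1) * ENNReal.ofReal (β + 1) ^ m * volume (ball (0 : E) 1) * 2⁻¹ ^ j := by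
  simpa only [finrank_euclideanSpace_fin] using
    dyadicWeight_mul_measure_ball_le (volume : Measure E) hβ hs 0 j

lemma dyadicWeight_mul_setLIntegral_le (h : E × E → ℝ) {x : E × E} {p q : E × E → E}
    {a b β : ℝ} (ha : 0 < a) (hb : 0 < b) (hβ : 0 ≤ β) (hpq : SublevelsInTubes x p q a b β)
    (j k : ℕ) :
    dyadicWeight m a j * dyadicWeight m b k *
        ∫⁻ z in {z | ‖p z‖ < 2 ^ j * a ∧ ‖q z‖ < 2 ^ k * b}, ENNReal.ofReal |h z| ≤
      (2 ^ (m + 1) * ENNReal.ofReal (β + 1) ^ m * volume (ball (0 : E) 1)) ^ 2 *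
        tubeMaximal m h x * 2⁻¹ ^ j * 2⁻¹ ^ k := by
  obtain ⟨σ, hσ, hsub, hvol⟩ := hpq (2 ^ j * a) (2 ^ k * b) (by positivity) (by positivity)
  have hfin : volume (tube m x σ) ≠ ∞ :=
    (hvol.trans_lt (ENNReal.mul_lt_top measure_ball_lt_top measure_ball_lt_top)).ne
  calc _ ≤ dyadicWeight m a j * dyadicWeight m b k *
          (volume (ball (0 : E) (β * a + 2 ^ j * a)) * volume (ball (0 : E) (β * b + 2 ^ k * b)) *
            tubeMaximal m h x) := by
        gcongr
        exact (lintegral_mono_set hsub).trans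
          ((setLIntegral_tube_le_volume_mul_tubeMaximal h x hσ hfin).trans (by gcongr))
    _ = (dyadicWeight m a j * volume (ball (0 : E) (β * a + 2 ^ j * a))) *
          (dyadicWeight m b k * volume (ball (0 : E) (β * b + 2 ^ k * b))) *
            tubeMaximal m h x := by
        ring
    _ ≤ _ := by
        grw [dyadicWeight_mul_volume_ball_le hβ ha j, dyadicWeight_mul_volume_ball_le hβ hb k]
        exact le_of_eq (by ring)

lemma lintegral_poissonProfile_mul_le_tubeMaximal (h : E × E → ℝ) (hh : AEMeasurable h)
    {x : E × E} {p q : E × E → E} (hp : Measurable p) (hq : Measurable q) {a b β : ℝ}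
    (ha : 0 < a) (hb : 0 < b) (hβ : 0 ≤ β) (hpq : SublevelsInTubes x p q a b β) :
    ∫⁻ z, ENNReal.ofReal (poissonProfile m a ‖p z‖) * ENNReal.ofReal (poissonProfile m b ‖q z‖) *
        ENNReal.ofReal |h z| ≤
      4 * (2 ^ (m + 1) * ENNReal.ofReal (β + 1) ^ m * volume (ball (0 : E) 1)) ^ 2 *
        tubeMaximal m h x := by
  set H := fun z => ENNReal.ofReal |h z|
  set K := 2 ^ (m + 1) * ENNReal.ofReal (β + 1) ^ m * volume (ball (0 : E) 1)
  set S := fun j k : ℕ => {z | ‖p z‖ < 2 ^ j * a ∧ ‖q z‖ < 2 ^ k * b}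
  have hH : AEMeasurable H := hh.abs.ennreal_ofReal
  have hS : ∀ j k, MeasurableSet (S j k) := fun j k =>
    (measurableSet_lt hp.norm measurable_const).inter (measurableSet_lt hq.norm measurable_const)
  calc ∫⁻ z, ENNReal.ofReal (poissonProfile m a ‖p z‖) *
        ENNReal.ofReal (poissonProfile m b ‖q z‖) * H z
      ≤ ∫⁻ z, ∑' j, ∑' k, dyadicWeight m a j * dyadicWeight m b k * (S j k).indicator H z :=
        lintegral_mono fun z => ofReal_poissonProfile_mul_le_tsum ha hb (fun z => norm_nonneg (p z))
          (fun z => norm_nonneg (q z)) H z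
    _ = ∑' j, ∑' k, dyadicWeight m a j * dyadicWeight m b k * ∫⁻ z in S j k, H z := by
        rw [lintegral_tsum fun j => AEMeasurable.tsum fun k => (hH.indicator (hS j k)).const_mul _]
        refine tsum_congr fun j => ?_
        rw [lintegral_tsum fun k => (hH.indicator (hS j k)).const_mul _]
        refine tsum_congr fun k => ?_
        have hfin : dyadicWeight m a j * dyadicWeight m b k ≠ ∞ :=
          ENNReal.mul_ne_top ENNReal.ofReal_ne_top ENNReal.ofReal_ne_top
        rw [lintegral_const_mul' _ _ hfin, lintegral_indicator (hS j k)]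
    _ ≤ ∑' j, ∑' k, K ^ 2 * tubeMaximal m h x * 2⁻¹ ^ j * 2⁻¹ ^ k :=
        ENNReal.tsum_le_tsum fun j => ENNReal.tsum_le_tsum fun k =>
          dyadicWeight_mul_setLIntegral_le h ha hb hβ hpq j k
    _ = 4 * K ^ 2 * tubeMaximal m h x := by
        simp_rw [ENNReal.tsum_mul_left, ENNReal.tsum_mul_right, ENNReal.tsum_mul_left,
          ENNReal.tsum_geometric_two]
        ring

end TubeMaximal

section Convolution

variable {m : ℕ}

local notation "E" => EuclideanSpace ℝ (Fin m)

lemma twPoi_eq_mul (c : ℝ) (r : ℝ × ℝ × ℝ) (w : E × E) :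
    twPoi m c r w = c ^ 3 * twPoi m 1 r w := by
  simp only [twPoi, poiKer_eq_mul c, ← integral_const_mul]
  congr 1 with u
  ring

lemma twConv_eq_mul (c : ℝ) (r : ℝ × ℝ × ℝ) (h : E × E → ℝ) (y : E × E) :
    twConv m c r h y = c ^ 3 * twConv m 1 r h y := by
  simp only [twConv, twPoi_eq_mul c, ← integral_const_mul, mul_assoc]

lemma measurable_ofReal_poissonProfile {α : Type*} [MeasurableSpace α] {f : α → ℝ}
    (hf : Measurable f) (n : ℕ) (s : ℝ) :
    Measurable fun z => ENNReal.ofReal (poissonProfile n s (f z)) := by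
  unfold poissonProfile; fun_prop

lemma ofReal_abs_twConv_le (h : E × E → ℝ) (hh : AEMeasurable h) {β : ℝ} (hβ : 0 ≤ β)
    {x y : E × E} {r : ℝ × ℝ × ℝ} (h₁ : 0 < r.1) (h₂ : 0 < r.2.1) (h₃ : 0 < r.2.2)
    (hy : y ∈ tube m x (β * r.1, β * r.2.1, β * r.2.2)) :
    ENNReal.ofReal |twConv m 1 r h y| ≤
      32 * 64 ^ (m + 1) * volume (ball (0 : E) 1) *
        (2 ^ (m + 1) * ENNReal.ofReal (β + 1) ^ m * volume (ball (0 : E) 1)) ^ 2 *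
        tubeMaximal m h x := by
  set C := 4 * 64 ^ (m + 1) * volume (ball (0 : E) 1)
  set K := 2 ^ (m + 1) * ENNReal.ofReal (β + 1) ^ m * volume (ball (0 : E) 1)
  set H := fun z => ENNReal.ofReal |h z|
  set Q₁₃ := fun z : E × E => ENNReal.ofReal (poissonProfile m (r.1 + r.2.2) ‖(y - z).1‖)
  set Q₁₂ := fun z : E × E =>
    ENNReal.ofReal (poissonProfile m (r.1 + r.2.1) ‖(y - z).1 - (y - z).2‖)
  set Q₂₃ := fun z : E × E => ENNReal.ofReal (poissonProfile m (r.2.1 + r.2.2) ‖(y - z).2‖)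
  have hQ : AEMeasurable fun z => Q₁₃ z * Q₁₂ z * H z :=
    ((measurable_ofReal_poissonProfile (by fun_prop) _ _).mul
      (measurable_ofReal_poissonProfile (by fun_prop) _ _)).aemeasurable.mul hh.abs.ennreal_ofReal
  calc ENNReal.ofReal |twConv m 1 r h y|
      ≤ ∫⁻ z, ENNReal.ofReal |twPoi m 1 r (y - z)| * H z := by
        refine (ofReal_abs_integral_le_lintegral _).trans_eq (lintegral_congr fun z => ?_)
        rw [abs_mul, ENNReal.ofReal_mul (abs_nonneg _)]
    _ ≤ ∫⁻ z, C * (Q₁₃ z * Q₁₂ z * H z + Q₁₃ z * Q₂₃ z * H z) := by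
        refine lintegral_mono fun z => ?_
        calc ENNReal.ofReal |twPoi m 1 r (y - z)| * H z ≤ C * Q₁₃ z * (Q₁₂ z + Q₂₃ z) * H z := by
              gcongr; exact ofReal_abs_twPoi_le h₁ h₂ h₃ (y - z)
          _ = _ := by ring
    _ = C * ((∫⁻ z, Q₁₃ z * Q₁₂ z * H z) + ∫⁻ z, Q₁₃ z * Q₂₃ z * H z) := by
        rw [lintegral_const_mul' _ _ (by finiteness), lintegral_add_left' hQ]
    _ ≤ C * (4 * K ^ 2 * tubeMaximal m h x + 4 * K ^ 2 * tubeMaximal m h x) := by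
        gcongr
        · exact lintegral_poissonProfile_mul_le_tubeMaximal h hh (by fun_prop) (by fun_prop)
            (by positivity) (by positivity) hβ (sublevelsInTubes_fst_sub hβ h₁ h₂ h₃ hy)
        · exact lintegral_poissonProfile_mul_le_tubeMaximal h hh (by fun_prop) (by fun_prop)
            (by positivity) (by positivity) hβ (sublevelsInTubes_fst_snd hβ h₁ h₂ h₃ hy)
    _ = _ := by ring

end Convolution

theorem twisted_poisson_le_tube_maximal_general (m : ℕ) (c : ℝ)
    (β : ℝ) (hβ : 0 < β) :
    ∃ C₀ : ℝ, 0 < C₀ ∧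
      ∀ h : EuclideanSpace ℝ (Fin m) × EuclideanSpace ℝ (Fin m) → ℝ,
        LocallyIntegrable h volume →
        ∀ (x y : EuclideanSpace ℝ (Fin m) × EuclideanSpace ℝ (Fin m)) (r : ℝ × ℝ × ℝ),
          0 < r.1 → 0 < r.2.1 → 0 < r.2.2 →
          y ∈ tube m x (β * r.1, β * r.2.1, β * r.2.2) →
          ENNReal.ofReal |twConv m c r h y| ≤ ENNReal.ofReal C₀ * tubeMaximal m h x := by
  set ν := volume (ball (0 : EuclideanSpace ℝ (Fin m)) 1)
  set C := 32 * 64 ^ (m + 1) * ν * (2 ^ (m + 1) * ENNReal.ofReal (β + 1) ^ m * ν) ^ 2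
  have hC : C ≠ ∞ := by
    have : ν ≠ ∞ := measure_ball_lt_top.ne
    finiteness
  refine ⟨|c| ^ 3 * C.toReal + 1, by positivity, fun h hh x y r h₁ h₂ h₃ hy => ?_⟩
  calc ENNReal.ofReal |twConv m c r h y|
      = ENNReal.ofReal (|c| ^ 3) * ENNReal.ofReal |twConv m 1 r h y| := by
        rw [twConv_eq_mul, abs_mul, abs_pow, ENNReal.ofReal_mul (by positivity)]
    _ ≤ ENNReal.ofReal (|c| ^ 3) * (C * tubeMaximal m h x) := by
        gcongr
        exact ofReal_abs_twConv_le h hh.aestronglyMeasurable.aemeasurable hβ.le h₁ h₂ h₃ hy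
    _ ≤ ENNReal.ofReal (|c| ^ 3 * C.toReal + 1) * tubeMaximal m h x := by
        rw [← mul_assoc, ← ENNReal.ofReal_toReal hC, ← ENNReal.ofReal_mul (by positivity),
          ENNReal.toReal_ofReal ENNReal.toReal_nonneg]
        gcongr
        linarith

/-- the twisted Poisson integral is dominated, throughout the
twisted cone of aperture `β`, by the tube maximal function at the vertex. -/
theorem twisted_poisson_le_tube_maximal (m : ℕ) (c : ℝ) (hc : 0 < c)
    (β : ℝ) (hβ : 0 < β) :
    ∃ C₀ : ℝ, 0 < C₀ ∧
      ∀ h : EuclideanSpace ℝ (Fin m) × EuclideanSpace ℝ (Fin m) → ℝ,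
        LocallyIntegrable h volume →
        ∀ (x y : EuclideanSpace ℝ (Fin m) × EuclideanSpace ℝ (Fin m)) (r : ℝ × ℝ × ℝ),
          0 < r.1 → 0 < r.2.1 → 0 < r.2.2 →
          y ∈ tube m x (β * r.1, β * r.2.1, β * r.2.2) →
          ENNReal.ofReal |twConv m c r h y| ≤ ENNReal.ofReal C₀ * tubeMaximal m h x :=
  twisted_poisson_le_tube_maximal_general m c β hβ

end
end
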